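/- arXiv:1905.07765 — 3 statements merged into one kernel-verified Lean document; each statement's English description precedes it below -/
import Mathlib

section
/- For every real x and every r > 0, ∫_0^∞ Φ(x√y) g_{r,r}(y) dy = S_{2r}(x), where g_{r,r} is the Gamma(r,r) density and S_{2r} is the CDF of Student's t-distribution with 2r degrees of freedom. -/
open MeasureTheory Real

/-- The standard normal distribution function. -/
noncomputable def stdNormalCDF (x : ℝ) : ℝ :=
  ∫ u in Set.Iic x, Real.exp (-u ^ 2 / 2) / Real.sqrt (2 * Real.pi)

/-- The Gamma(r, r) density (shape = scale parameter = r). -/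
noncomputable def gammaRRpdf (r y : ℝ) : ℝ :=
  r ^ r / Real.Gamma r * y ^ (r - 1) * Real.exp (-r * y)

/-- Student's t density with ν degrees of freedom. -/
noncomputable def studentPdf (ν x : ℝ) : ℝ :=
  Real.Gamma ((ν + 1) / 2) / (Real.sqrt (ν * Real.pi) * Real.Gamma (ν / 2)) *
    (1 + x ^ 2 / ν) ^ (-(ν + 1) / 2)

/-- Student's t distribution function with ν degrees of freedom. -/
noncomputable def studentCDF (ν x : ℝ) : ℝ :=
  ∫ u in Set.Iic x, studentPdf ν u

lemma integral_comp_mul_left_Iic' (g : ℝ → ℝ) (a : ℝ) {b : ℝ} (hb : 0 < b) :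
    (∫ x in Set.Iic a, g (b * x)) = b⁻¹ • ∫ x in Set.Iic (b * a), g x := by
  rw [← integral_indicator measurableSet_Iic, ← integral_indicator measurableSet_Iic,
    ← abs_of_pos (inv_pos.mpr hb), ← Measure.integral_comp_mul_left]
  congr 1
  ext1 x
  rw [← Set.indicator_comp_right, Set.preimage_const_mul_Iic₀ _ hb,
    mul_div_cancel_left₀ _ hb.ne']
  rfl

lemma aux_cong (r : ℝ) (hr : 0 < r) (t : ℝ) : ∀ y ∈ Set.Ioi (0:ℝ),
    Real.sqrt y * Real.exp (-(t^2*y)/2) / Real.sqrt (2*Real.pi) * gammaRRpdf r y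
      = (r ^ r / Real.Gamma r / Real.sqrt (2*Real.pi)) *
        (y ^ ((r + 1/2) - 1) * Real.exp (-((r + t^2/2) * y))) := by
  intro y hy
  have hy0 : (0:ℝ) < y := hy
  have h1 : y ^ ((r + 1/2) - 1 : ℝ) = y ^ (r - 1 : ℝ) * Real.sqrt y := by
    rw [Real.sqrt_eq_rpow, ← Real.rpow_add hy0]
    congr 1; ring
  have h2 : Real.exp (-((r + t^2/2) * y)) = Real.exp (-(t^2*y)/2) * Real.exp (-r*y) := by
    rw [← Real.exp_add]; ring_nf
  rw [gammaRRpdf, h1, h2]; ring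

lemma aux_integrable (r : ℝ) (hr : 0 < r) (t : ℝ) :
    IntegrableOn (fun y => Real.sqrt y * Real.exp (-(t^2*y)/2) / Real.sqrt (2*Real.pi)
      * gammaRRpdf r y) (Set.Ioi 0) := by
  have hA : (0:ℝ) < r + t^2/2 := by positivity
  have base : IntegrableOn (fun y : ℝ => y ^ ((r + 1/2) - 1) *
      Real.exp (-((r + t^2/2) * y))) (Set.Ioi 0) := by
    have h := integrableOn_rpow_mul_exp_neg_mul_rpow (p := 1) (s := (r + 1/2) - 1)
      (b := r + t^2/2) (by linarith) one_pos hA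
    exact h.congr_fun (fun y _ => by beta_reduce; rw [Real.rpow_one, neg_mul]) measurableSet_Ioi
  exact MeasureTheory.IntegrableOn.congr_fun (base.const_mul _)
    (fun y hy => (aux_cong r hr t y hy).symm) measurableSet_Ioi

lemma aux_inner (r : ℝ) (hr : 0 < r) (t : ℝ) :
    ∫ y in Set.Ioi (0:ℝ), Real.sqrt y * Real.exp (-(t^2*y)/2) / Real.sqrt (2*Real.pi)
      * gammaRRpdf r y = studentPdf (2*r) t := by
  have hA : (0:ℝ) < r + t^2/2 := by positivity
  have hB : (0:ℝ) < 1 + t^2/(2*r) := by positivity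
  rw [setIntegral_congr_fun measurableSet_Ioi (aux_cong r hr t), integral_const_mul _ _,
    Real.integral_rpow_mul_exp_neg_mul_Ioi (by linarith : (0:ℝ) < r + 1/2) hA]
  unfold studentPdf
  rw [show (2*r+1)/2 = r + 1/2 by ring, show (2*r)/2 = r by ring,
    show -(2*r+1)/2 = -(r+1/2) by ring]
  rw [one_div, Real.inv_rpow hA.le, ← Real.rpow_neg hA.le,
    show r + t^2/2 = r * (1 + t^2/(2*r)) by field_simp,
    Real.mul_rpow hr.le hB.le]
  have h4 : r ^ (r:ℝ) * r ^ (-(r+1/2):ℝ) = (Real.sqrt r)⁻¹ := by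
    rw [← Real.rpow_add hr, show r + -(r+1/2) = -(1/2) by ring, Real.rpow_neg hr.le,
      ← Real.sqrt_eq_rpow]
  have h5 : Real.sqrt (2*r*π) = Real.sqrt (2*π) * Real.sqrt r := by
    rw [show (2*r*π:ℝ) = (2*π)*r by ring, Real.sqrt_mul (by positivity)]
  have hΓ : (0:ℝ) < Real.Gamma r := Real.Gamma_pos_of_pos hr
  have hs2 : (0:ℝ) < Real.sqrt (2*π) := Real.sqrt_pos.2 (by positivity)
  have hsr : (0:ℝ) < Real.sqrt r := Real.sqrt_pos.2 hr
  rw [h5]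
  set X := r ^ (-(r+1/2) : ℝ) with hX
  set Y := (1 + t^2/(2*r)) ^ (-(r+1/2) : ℝ) with hY
  set R := r ^ (r : ℝ) with hR
  set G := Real.Gamma (r+1/2) with hG
  set D := Real.Gamma r with hD
  calc R / D / Real.sqrt (2*π) * (X * Y * G)
      = (R * X) * Y * G / (D * Real.sqrt (2*π)) := by ring
    _ = (Real.sqrt r)⁻¹ * Y * G / (D * Real.sqrt (2*π)) := by rw [h4]
    _ = G / (Real.sqrt (2*π) * Real.sqrt r * D) * Y := by
        field_simp

lemma aux_std (r x y : ℝ) (hy : 0 < y) :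
    stdNormalCDF (x * Real.sqrt y) * gammaRRpdf r y
      = ∫ t in Set.Iic x, Real.sqrt y * Real.exp (-(t^2*y)/2) / Real.sqrt (2*Real.pi)
          * gammaRRpdf r y := by
  have hsy : 0 < Real.sqrt y := Real.sqrt_pos.2 hy
  have h := integral_comp_mul_left_Iic'
    (fun u => Real.exp (-u^2/2) / Real.sqrt (2*Real.pi)) x hsy
  rw [smul_eq_mul] at h
  have hpt : ∀ t : ℝ,
      Real.sqrt y * Real.exp (-(t^2*y)/2) / Real.sqrt (2*Real.pi) * gammaRRpdf r y
        = (Real.sqrt y * Real.exp (-(Real.sqrt y * t)^2/2) / Real.sqrt (2*Real.pi))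
            * gammaRRpdf r y := by
    intro t
    rw [mul_pow, Real.sq_sqrt hy.le]
    ring
  simp_rw [hpt]
  rw [integral_mul_const]
  simp_rw [mul_div_assoc]
  rw [integral_const_mul, h, ← mul_assoc, mul_inv_cancel₀ hsy.ne', one_mul,
    stdNormalCDF, mul_comm x (Real.sqrt y)]

lemma gammaRRpdf_nonneg {r : ℝ} (hr : 0 < r) {y : ℝ} (hy : 0 ≤ y) : 0 ≤ gammaRRpdf r y := by
  unfold gammaRRpdf
  have h1 : (0:ℝ) ≤ y ^ (r - 1) := Real.rpow_nonneg hy _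
  have h2 : (0:ℝ) ≤ r ^ r / Real.Gamma r :=
    div_nonneg (Real.rpow_nonneg hr.le _) (Real.Gamma_nonneg_of_nonneg hr.le)
  exact mul_nonneg (mul_nonneg h2 h1) (Real.exp_nonneg _)

lemma studentPdf_nonneg (ν : ℝ) (hν : 0 < ν) (t : ℝ) : 0 ≤ studentPdf ν t := by
  unfold studentPdf
  have hB : (0:ℝ) ≤ 1 + t^2/ν := by positivity
  have h1 : (0:ℝ) ≤ (1 + t^2/ν) ^ (-(ν+1)/2) := Real.rpow_nonneg hB _
  have h2 : (0:ℝ) ≤ Real.Gamma ((ν+1)/2) := Real.Gamma_nonneg_of_nonneg (by positivity)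
  have h3 : (0:ℝ) ≤ Real.sqrt (ν * π) * Real.Gamma (ν/2) :=
    mul_nonneg (Real.sqrt_nonneg _) (Real.Gamma_nonneg_of_nonneg (by positivity))
  exact mul_nonneg (div_nonneg h2 h3) h1

/-- The scale mixture of normals by a Gamma(r,r) mixing law is Student's t
distribution with 2r degrees of freedom. -/
theorem gamma_mixture_of_normals_eq_student (r : ℝ) (hr : 0 < r) (x : ℝ) :
    ∫ y in Set.Ioi (0 : ℝ), stdNormalCDF (x * Real.sqrt y) * gammaRRpdf r y
      = studentCDF (2 * r) x := by
  set F : ℝ → ℝ → ℝ := fun t y =>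
    Real.sqrt y * Real.exp (-(t^2*y)/2) / Real.sqrt (2*Real.pi) * gammaRRpdf r y with hF
  have hFnn : ∀ t : ℝ, ∀ y ∈ Set.Ioi (0:ℝ), 0 ≤ F t y := by
    intro t y hy
    have := gammaRRpdf_nonneg hr (le_of_lt hy)
    have h1 : (0:ℝ) ≤ Real.sqrt y * Real.exp (-(t^2*y)/2) / Real.sqrt (2*Real.pi) := by
      positivity
    exact mul_nonneg h1 this
  have hG : Measurable fun p : ℝ × ℝ => F p.2 p.1 := by
    simp only [hF]
    unfold gammaRRpdf
    fun_prop
  have hGae : AEMeasurable (Function.uncurry fun y t => ENNReal.ofReal (F t y))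
      ((volume.restrict (Set.Ioi (0:ℝ))).prod (volume.restrict (Set.Iic x))) :=
    (hG.ennreal_ofReal).aemeasurable
  calc ∫ y in Set.Ioi (0:ℝ), stdNormalCDF (x * Real.sqrt y) * gammaRRpdf r y
      = ∫ y in Set.Ioi (0:ℝ), ∫ t in Set.Iic x, F t y :=
        setIntegral_congr_fun measurableSet_Ioi (fun y hy => aux_std r x y hy)
    _ = (∫⁻ y in Set.Ioi (0:ℝ), ENNReal.ofReal (∫ t in Set.Iic x, F t y)).toReal := by
        apply integral_eq_lintegral_of_nonneg_ae
        · filter_upwards [ae_restrict_mem measurableSet_Ioi] with y hy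
          exact integral_nonneg fun t => hFnn t y hy
        · exact (hG.aestronglyMeasurable).integral_prod_right'
    _ = (∫⁻ y in Set.Ioi (0:ℝ), ∫⁻ t in Set.Iic x, ENNReal.ofReal (F t y)).toReal := by
        congr 1
        apply lintegral_congr_ae
        filter_upwards [ae_restrict_mem measurableSet_Ioi] with y hy
        have hInt : Integrable (fun t => F t y) (volume.restrict (Set.Iic x)) := by
          have h0 : Integrable (fun t : ℝ => Real.exp (-(y/2) * t^2)) volume :=
            integrable_exp_neg_mul_sq (by linarith [Set.mem_Ioi.mp hy])
          have h1 := (h0.const_mul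
            (Real.sqrt y / Real.sqrt (2*Real.pi) * gammaRRpdf r y)).restrict (s := Set.Iic x)
          apply h1.congr
          apply Filter.Eventually.of_forall
          intro t
          simp only [hF]
          rw [show (-(y/2) * t^2 : ℝ) = -(t^2*y)/2 by ring]
          ring
        exact ofReal_integral_eq_lintegral_ofReal hInt
          (Filter.Eventually.of_forall fun t => hFnn t y hy)
    _ = (∫⁻ t in Set.Iic x, ∫⁻ y in Set.Ioi (0:ℝ), ENNReal.ofReal (F t y)).toReal := by
        rw [lintegral_lintegral_swap hGae]
    _ = (∫⁻ t in Set.Iic x, ENNReal.ofReal (studentPdf (2*r) t)).toReal := by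
        congr 1
        apply lintegral_congr_ae
        apply Filter.Eventually.of_forall
        intro t
        have h := ofReal_integral_eq_lintegral_ofReal (aux_integrable r hr t)
          ((ae_restrict_iff' measurableSet_Ioi).mpr
            (Filter.Eventually.of_forall fun y hy => hFnn t y hy))
        exact h.symm.trans (congrArg ENNReal.ofReal (aux_inner r hr t))
    _ = studentCDF (2*r) x := by
        rw [studentCDF]
        refine (integral_eq_lintegral_of_nonneg_ae
          (Filter.Eventually.of_forall fun t => studentPdf_nonneg (2*r) (by linarith) t)
          ?_).symm
        apply Continuous.aestronglyMeasurable
        unfold studentPdf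
        have hc : Continuous fun u : ℝ => (1 + u^2/(2*r)) ^ (-(2*r+1)/2 : ℝ) := by
          apply Continuous.rpow_const
          · fun_prop
          · intro u
            left
            have : (0:ℝ) < 1 + u^2/(2*r) := by positivity
            exact ne_of_gt this
        exact continuous_const.mul hc
end

section
/- For every real x and every s > 0, ∫_0^∞ Φ(x√y) dH_s(y) = L_{1/√s}(x), where H_s(y) = e^{-s/y} for y > 0 is the inverse-exponential CDF and L_{1/√s} is the CDF of the symmetric Laplace distribution with density (√(s)/√2) e^{-√(2s)|x|}. -/
open MeasureTheory Real

/-- Density of the inverse exponential distribution `H_s(y) = e^{-s/y}` on `(0,∞)`. -/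
noncomputable def invExpPdf (s y : ℝ) : ℝ := s * Real.exp (-s / y) / y ^ 2

/-- Density of the symmetric Laplace distribution with parameter `μ = 1/√s`,
`l_{1/√s}(x) = √(s/2) e^{-√(2s)|x|}`. -/
noncomputable def laplacePdfInvSqrt (s x : ℝ) : ℝ :=
  Real.sqrt (s / 2) * Real.exp (-Real.sqrt (2 * s) * |x|)

/-- Laplace distribution function with parameter `1/√s`. -/
noncomputable def laplaceCDFInvSqrt (s x : ℝ) : ℝ :=
  ∫ u in Set.Iic x, laplacePdfInvSqrt s u

open Set

lemma inv_image (s : ℝ) (hs : 0 < s) : (fun u : ℝ => s / u) '' Ioi 0 = Ioi 0 := by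
  ext y; constructor
  · rintro ⟨u, hu, rfl⟩; exact div_pos hs hu
  · intro hy; exact ⟨s / y, div_pos hs hy, by field_simp⟩

lemma inv_deriv (s : ℝ) {u : ℝ} (hu : u ≠ 0) :
    HasDerivAt (fun u : ℝ => s / u) (-(s / u ^ 2)) u := by
  have := (hasDerivAt_inv hu).const_mul s
  simpa [div_eq_mul_inv, neg_div, mul_div_assoc] using this

lemma inv_injOn (s : ℝ) (hs : 0 < s) : InjOn (fun u : ℝ => s / u) (Ioi 0) := by
  intro a ha b hb hab
  simp only [Set.mem_Ioi] at ha hb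
  field_simp at hab
  exact hab.symm

lemma integral_inv_sub (s : ℝ) (hs : 0 < s) (g : ℝ → ℝ) :
    ∫ y in Ioi (0:ℝ), g y = ∫ u in Ioi (0:ℝ), (s / u ^ 2) * g (s / u) := by
  conv_lhs => rw [← inv_image s hs]
  rw [integral_image_eq_integral_abs_deriv_smul measurableSet_Ioi
    (f' := fun u => -(s / u ^ 2)) (fun u hu => (inv_deriv s (ne_of_gt hu)).hasDerivWithinAt)
    (inv_injOn s hs) g]
  apply setIntegral_congr_fun measurableSet_Ioi
  intro u hu
  simp only [Set.mem_Ioi] at hu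
  dsimp only
  rw [abs_neg, abs_of_pos (div_pos hs (pow_pos hu 2)), smul_eq_mul]

lemma integrableOn_inv_sub (s : ℝ) (hs : 0 < s) (g : ℝ → ℝ) :
    IntegrableOn g (Ioi (0:ℝ)) ↔
      IntegrableOn (fun u => (s / u ^ 2) * g (s / u)) (Ioi (0:ℝ)) := by
  conv_lhs => rw [← inv_image s hs]
  rw [integrableOn_image_iff_integrableOn_abs_deriv_smul measurableSet_Ioi
    (fun u hu => (inv_deriv s (ne_of_gt hu)).hasDerivWithinAt) (inv_injOn s hs) g]
  apply integrableOn_congr_fun _ measurableSet_Ioi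
  intro u hu
  simp only [Set.mem_Ioi] at hu
  dsimp only
  rw [abs_neg, abs_of_pos (div_pos hs (pow_pos hu 2)), smul_eq_mul]

lemma glasser_deriv (c : ℝ) {u : ℝ} (hu : u ≠ 0) :
    HasDerivAt (fun u : ℝ => u - c / u) (1 + c / u ^ 2) u := by
  have := (hasDerivAt_id u).sub (inv_deriv c hu)
  exact this.congr_deriv (by ring)

lemma glasser_injOn (c : ℝ) (hc : 0 < c) : InjOn (fun u : ℝ => u - c / u) (Ioi 0) := by
  apply StrictMonoOn.injOn
  intro a ha b hb hab
  simp only [Set.mem_Ioi] at ha hb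
  have h2 : c / b < c / a := by gcongr
  simp only
  linarith

lemma glasser_image (c : ℝ) (hc : 0 < c) : (fun u : ℝ => u - c / u) '' Ioi 0 = univ := by
  ext w
  simp only [Set.mem_univ, iff_true, Set.mem_image, Set.mem_Ioi]
  have hnn : (0:ℝ) ≤ w ^ 2 + 4 * c := by nlinarith
  have hr : Real.sqrt (w ^ 2 + 4 * c) ^ 2 = w ^ 2 + 4 * c := Real.sq_sqrt hnn
  have h1 : |w| < Real.sqrt (w ^ 2 + 4 * c) := by
    rw [← Real.sqrt_sq_eq_abs]
    apply Real.sqrt_lt_sqrt (sq_nonneg w)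
    linarith
  have hu : 0 < (w + Real.sqrt (w ^ 2 + 4 * c)) / 2 := by
    nlinarith [neg_abs_le w]
  refine ⟨(w + Real.sqrt (w ^ 2 + 4 * c)) / 2, hu, ?_⟩
  have hne : w + Real.sqrt (w ^ 2 + 4 * c) ≠ 0 :=
    ne_of_gt (by nlinarith [neg_abs_le w])
  rw [div_div_eq_mul_div, div_sub_div _ _ two_ne_zero hne, div_eq_iff (by positivity)]
  nlinarith [hr]

lemma glasser_total (c : ℝ) (hc : 0 < c) :
    ∫ u in Ioi (0:ℝ), Real.exp (-(u - c / u) ^ 2) * (1 + c / u ^ 2) = Real.sqrt π := by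
  have h := integral_image_eq_integral_abs_deriv_smul measurableSet_Ioi
    (f' := fun u => 1 + c / u ^ 2)
    (fun u hu => (glasser_deriv c (ne_of_gt hu)).hasDerivWithinAt)
    (glasser_injOn c hc) (fun w => Real.exp (-w ^ 2))
  rw [glasser_image c hc, Measure.restrict_univ] at h
  have hg : ∫ (w : ℝ), Real.exp (-w ^ 2) = Real.sqrt π := by
    have := integral_gaussian 1
    simpa using this
  rw [← hg, h]
  apply setIntegral_congr_fun measurableSet_Ioi
  intro u hu
  simp only [Set.mem_Ioi] at hu
  dsimp only
  rw [smul_eq_mul, abs_of_pos (by positivity), mul_comm]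

lemma intA (c : ℝ) (hc : 0 < c) :
    IntegrableOn (fun u => Real.exp (-(u - c / u) ^ 2)) (Ioi (0:ℝ)) := by
  apply Integrable.mono
    (g := fun u => Real.exp (2 * c) * Real.exp (-(1:ℝ) * u ^ 2))
    (((integrable_exp_neg_mul_sq one_pos).const_mul _).integrableOn)
  · have m1 : Measurable fun u : ℝ => u - c / u :=
      measurable_id.sub (measurable_const.div measurable_id)
    exact (Measurable.aestronglyMeasurable (((m1.pow_const 2).neg).exp)).restrict
  · filter_upwards with u
    rw [Real.norm_eq_abs, Real.norm_eq_abs, abs_of_pos (Real.exp_pos _),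
      abs_of_pos (by positivity), ← Real.exp_add]
    apply Real.exp_le_exp.mpr
    by_cases hu : u = 0
    · subst hu; simp; nlinarith
    · have h1 : (u - c / u) ^ 2 = u ^ 2 - 2 * c + (c / u) ^ 2 := by
        field_simp; ring
    
      nlinarith [sq_nonneg (c / u)]

lemma key_congr (c : ℝ) (hc : 0 < c) {u : ℝ} (hu : 0 < u) :
    Real.exp (-(c / u - c / (c / u)) ^ 2) = Real.exp (-(u - c / u) ^ 2) := by
  have h : c / (c / u) = u := by field_simp
  rw [h, ← neg_sub u (c / u), neg_sq]

lemma intB (c : ℝ) (hc : 0 < c) :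
    IntegrableOn (fun u => (c / u ^ 2) * Real.exp (-(u - c / u) ^ 2)) (Ioi (0:ℝ)) := by
  have h := (integrableOn_inv_sub c hc (fun u => Real.exp (-(u - c / u) ^ 2))).mp (intA c hc)
  apply h.congr_fun _ measurableSet_Ioi
  intro u hu
  simp only [Set.mem_Ioi] at hu
  dsimp only
  rw [key_congr c hc hu]

lemma glasser_half (c : ℝ) (hc : 0 < c) :
    ∫ u in Ioi (0:ℝ), Real.exp (-(u - c / u) ^ 2) = Real.sqrt π / 2 := by
  have hsub : ∫ u in Ioi (0:ℝ), Real.exp (-(u - c / u) ^ 2)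
      = ∫ u in Ioi (0:ℝ), (c / u ^ 2) * Real.exp (-(u - c / u) ^ 2) := by
    rw [integral_inv_sub c hc (fun u => Real.exp (-(u - c / u) ^ 2))]
    apply setIntegral_congr_fun measurableSet_Ioi
    intro u hu
    simp only [Set.mem_Ioi] at hu
    dsimp only
    rw [key_congr c hc hu]
  have hadd : ∫ u in Ioi (0:ℝ), Real.exp (-(u - c / u) ^ 2) * (1 + c / u ^ 2)
      = (∫ u in Ioi (0:ℝ), Real.exp (-(u - c / u) ^ 2))
        + ∫ u in Ioi (0:ℝ), (c / u ^ 2) * Real.exp (-(u - c / u) ^ 2) := by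
    rw [← integral_add (intA c hc) (intB c hc)]
    congr 1
    funext u
    ring
  have htot := glasser_total c hc
  linarith [hsub ▸ hadd ▸ htot]

lemma gauss_inv (c : ℝ) (hc : 0 ≤ c) :
    ∫ u in Ioi (0:ℝ), Real.exp (-u ^ 2 - c ^ 2 / u ^ 2)
      = Real.sqrt π / 2 * Real.exp (-(2 * c)) := by
  rcases eq_or_lt_of_le hc with h | h
  · subst h
    simp only [ne_eq, OfNat.ofNat_ne_zero, not_false_eq_true, zero_pow, zero_div, sub_zero,
      mul_zero, neg_zero, Real.exp_zero, mul_one]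
    have := integral_gaussian_Ioi 1
    simp only [one_mul, neg_mul] at this
    rw [this, div_one]
  · have hcongr : ∀ u ∈ Ioi (0:ℝ), Real.exp (-u ^ 2 - c ^ 2 / u ^ 2)
        = Real.exp (-(u - c / u) ^ 2) * Real.exp (-(2 * c)) := by
      intro u hu
      simp only [Set.mem_Ioi] at hu
      rw [← Real.exp_add]
      congr 1
      field_simp
      ring
    rw [setIntegral_congr_fun measurableSet_Ioi hcongr, integral_mul_const,
      glasser_half c h]

lemma invsq_deriv (s : ℝ) {u : ℝ} (hu : u ≠ 0) :
    HasDerivAt (fun u : ℝ => s / u ^ 2) (-(2 * s / u ^ 3)) u := by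
  have h := ((hasDerivAt_pow 2 u).inv (pow_ne_zero 2 hu)).const_mul s
  have he : (fun u : ℝ => s / u ^ 2) = fun u : ℝ => s * (u ^ 2)⁻¹ := by
    funext v; rw [div_eq_mul_inv]
  rw [he]
  refine h.congr_deriv ?_
  field_simp
  ring

lemma invsq_image (s : ℝ) (hs : 0 < s) : (fun u : ℝ => s / u ^ 2) '' Ioi 0 = Ioi 0 := by
  ext y; constructor
  · rintro ⟨u, hu, rfl⟩; exact div_pos hs (pow_pos hu 2)
  · intro hy
    have hy' : (0:ℝ) < y := hy
    refine ⟨Real.sqrt (s / y), Real.sqrt_pos.mpr (div_pos hs hy'), ?_⟩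
    simp only
    rw [Real.sq_sqrt (div_pos hs hy').le]
    field_simp

lemma invsq_injOn (s : ℝ) (hs : 0 < s) : InjOn (fun u : ℝ => s / u ^ 2) (Ioi 0) := by
  intro a ha b hb hab
  simp only [Set.mem_Ioi] at ha hb
  simp only at hab
  field_simp at hab
  exact ((sq_eq_sq₀ hb.le ha.le).mp hab).symm

lemma integral_invsq_sub (s : ℝ) (hs : 0 < s) (g : ℝ → ℝ) :
    ∫ y in Ioi (0:ℝ), g y = ∫ u in Ioi (0:ℝ), (2 * s / u ^ 3) * g (s / u ^ 2) := by
  conv_lhs => rw [← invsq_image s hs]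
  rw [integral_image_eq_integral_abs_deriv_smul measurableSet_Ioi
    (f' := fun u => -(2 * s / u ^ 3)) (fun u hu => (invsq_deriv s (ne_of_gt hu)).hasDerivWithinAt)
    (invsq_injOn s hs) g]
  apply setIntegral_congr_fun measurableSet_Ioi
  intro u hu
  simp only [Set.mem_Ioi] at hu
  dsimp only
  rw [abs_neg, abs_of_pos (by positivity), smul_eq_mul]

lemma sqrt_two_s (s : ℝ) (hs : 0 < s) : 2 * Real.sqrt (s / 2) = Real.sqrt (2 * s) := by
  rw [show (2:ℝ) * s = 4 * (s / 2) by ring, show (4:ℝ) = 2 ^ 2 by norm_num,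
    Real.sqrt_mul (by positivity), Real.sqrt_sq (by norm_num : (0:ℝ) ≤ 2)]

lemma mixture_density (s : ℝ) (hs : 0 < s) (t : ℝ) :
    ∫ y in Ioi (0:ℝ),
        Real.exp (-(t * Real.sqrt y) ^ 2 / 2) / Real.sqrt (2 * π) * Real.sqrt y * invExpPdf s y
      = laplacePdfInvSqrt s t := by
  set c : ℝ := Real.sqrt (s / 2) * |t| with hc_def
  have hc : 0 ≤ c := by positivity
  have hc2 : c ^ 2 = s / 2 * t ^ 2 := by
    rw [hc_def, mul_pow, Real.sq_sqrt (by positivity), sq_abs]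
  have hstep : ∫ y in Ioi (0:ℝ),
      Real.exp (-(t * Real.sqrt y) ^ 2 / 2) / Real.sqrt (2 * π) * Real.sqrt y * invExpPdf s y
      = ∫ u in Ioi (0:ℝ),
          (2 * Real.sqrt s / Real.sqrt (2 * π)) * Real.exp (-u ^ 2 - c ^ 2 / u ^ 2) := by
    rw [integral_invsq_sub s hs _]
    apply setIntegral_congr_fun measurableSet_Ioi
    intro u hu
    simp only [Set.mem_Ioi] at hu
    dsimp only
    rw [invExpPdf]
    have h1 : Real.sqrt (s / u ^ 2) = Real.sqrt s / u := by
      rw [Real.sqrt_div hs.le, Real.sqrt_sq hu.le]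
    have h2 : -s / (s / u ^ 2) = -u ^ 2 := by field_simp
    have h3 : -(t * (Real.sqrt s / u)) ^ 2 / 2 = -(c ^ 2 / u ^ 2) := by
      rw [hc2, mul_pow, div_pow, Real.sq_sqrt hs.le]
      ring
    rw [h1, h2, h3, show -u ^ 2 - c ^ 2 / u ^ 2 = -(c ^ 2 / u ^ 2) + -u ^ 2 by ring,
      Real.exp_add]
    set E1 := Real.exp (-(c ^ 2 / u ^ 2))
    set E2 := Real.exp (-u ^ 2)
    have hsq : s = Real.sqrt s ^ 2 := (Real.sq_sqrt hs.le).symm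
    rw [hsq]
    have h2pi : Real.sqrt (2 * π) ≠ 0 := by positivity
    have hss : Real.sqrt s ≠ 0 := by positivity
    field_simp
  rw [hstep, integral_const_mul, gauss_inv c hc, laplacePdfInvSqrt,
    show -Real.sqrt (2 * s) * |t| = -(2 * c) by rw [hc_def, ← sqrt_two_s s hs]; ring]
  have h2 : Real.sqrt (2 * π) = Real.sqrt 2 * Real.sqrt π := Real.sqrt_mul (by norm_num) π
  have h3 : Real.sqrt (s / 2) = Real.sqrt s / Real.sqrt 2 := Real.sqrt_div hs.le 2
  have hpi : Real.sqrt π ≠ 0 := by positivity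
  have h2' : Real.sqrt 2 ≠ 0 := by positivity
  rw [h2, h3]
  field_simp

lemma scale_image (a x : ℝ) (ha : 0 < a) : (fun t : ℝ => t * a) '' Iic x = Iic (x * a) := by
  ext w
  simp only [Set.mem_image, Set.mem_Iic]
  constructor
  · rintro ⟨t, ht, rfl⟩; exact mul_le_mul_of_nonneg_right ht ha.le
  · intro hw; exact ⟨w / a, (div_le_iff₀ ha).mpr hw, div_mul_cancel₀ _ ha.ne'⟩

lemma cdf_scale (s x y : ℝ) (hy : 0 < y) :
    stdNormalCDF (x * Real.sqrt y) =
      ∫ t in Iic x, Real.exp (-(t * Real.sqrt y) ^ 2 / 2) / Real.sqrt (2 * π) * Real.sqrt y := by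
  have ha : 0 < Real.sqrt y := Real.sqrt_pos.mpr hy
  rw [stdNormalCDF, ← scale_image (Real.sqrt y) x ha,
    integral_image_eq_integral_abs_deriv_smul measurableSet_Iic
      (f' := fun _ => Real.sqrt y) (fun t _ => (hasDerivAt_mul_const _).hasDerivWithinAt)
      ((mul_left_injective₀ ha.ne').injOn) _]
  apply setIntegral_congr_fun measurableSet_Iic
  intro t _
  dsimp only
  rw [smul_eq_mul, abs_of_pos ha]
  ring

lemma gauss_pdf_eq : (fun u : ℝ => Real.exp (-u ^ 2 / 2) / Real.sqrt (2 * π))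
    = fun u : ℝ => Real.exp (-(1 / 2 : ℝ) * u ^ 2) * (1 / Real.sqrt (2 * π)) := by
  funext u
  rw [show -(1 / 2 : ℝ) * u ^ 2 = -u ^ 2 / 2 by ring]
  ring

lemma gauss_pdf_integrable :
    Integrable (fun u : ℝ => Real.exp (-u ^ 2 / 2) / Real.sqrt (2 * π)) := by
  rw [gauss_pdf_eq]
  exact (integrable_exp_neg_mul_sq (by norm_num)).mul_const _

lemma gauss_pdf_total : ∫ u : ℝ, Real.exp (-u ^ 2 / 2) / Real.sqrt (2 * π) = 1 := by
  rw [gauss_pdf_eq]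
  rw [integral_mul_const, integral_gaussian]
  rw [show π / (1 / 2 : ℝ) = 2 * π by ring]
  rw [mul_one_div, div_self (by positivity)]

lemma stdNormalCDF_nonneg (z : ℝ) : 0 ≤ stdNormalCDF z :=
  integral_nonneg fun u => by positivity

lemma stdNormalCDF_le_one (z : ℝ) : stdNormalCDF z ≤ 1 := by
  rw [← gauss_pdf_total, stdNormalCDF]
  exact setIntegral_le_integral gauss_pdf_integrable
    (Filter.Eventually.of_forall fun u => by positivity)

lemma invExpPdf_nonneg (s y : ℝ) (hs : 0 < s) : 0 ≤ invExpPdf s y := by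
  rw [invExpPdf]; positivity

lemma invExpPdf_integrableOn (s : ℝ) (hs : 0 < s) :
    IntegrableOn (fun y => invExpPdf s y) (Ioi (0:ℝ)) := by
  rw [integrableOn_inv_sub s hs]
  apply (exp_neg_integrableOn_Ioi 0 one_pos).congr_fun _ measurableSet_Ioi
  intro u hu
  simp only [Set.mem_Ioi] at hu
  dsimp only
  rw [invExpPdf, show -s / (s / u) = -1 * u by field_simp]
  field_simp

noncomputable def mixF (s y t : ℝ) : ℝ :=
  Real.exp (-(t * Real.sqrt y) ^ 2 / 2) / Real.sqrt (2 * π) * Real.sqrt y * invExpPdf s y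

lemma mixF_nonneg (s y t : ℝ) (hs : 0 < s) : 0 ≤ mixF s y t := by
  rw [mixF]
  have := invExpPdf_nonneg s y hs
  positivity

lemma mixF_integrable_t (s y : ℝ) (hy : 0 < y) (x : ℝ) :
    IntegrableOn (fun t => mixF s y t) (Iic x) := by
  have h : Integrable (fun t : ℝ =>
      Real.exp (-(y / 2) * t ^ 2) * (Real.sqrt y * invExpPdf s y / Real.sqrt (2 * π))) :=
    (integrable_exp_neg_mul_sq (by positivity)).mul_const _
  have he : (fun t => mixF s y t) = fun t : ℝ =>
      Real.exp (-(y / 2) * t ^ 2) * (Real.sqrt y * invExpPdf s y / Real.sqrt (2 * π)) := by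
    funext t
    rw [mixF, show -(t * Real.sqrt y) ^ 2 / 2 = -(y / 2) * t ^ 2 by
      rw [mul_pow, Real.sq_sqrt hy.le]; ring]
    ring
  rw [he]
  exact h.integrableOn

lemma mixF_aesm (s x : ℝ) :
    AEStronglyMeasurable (Function.uncurry (mixF s))
      ((volume.restrict (Ioi 0)).prod (volume.restrict (Iic x))) := by
  apply Measurable.aestronglyMeasurable
  have m1 : Measurable fun p : ℝ × ℝ => p.2 * Real.sqrt p.1 :=
    measurable_snd.mul (Real.continuous_sqrt.measurable.comp measurable_fst)
  have m2 : Measurable fun p : ℝ × ℝ =>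
      Real.exp (-(p.2 * Real.sqrt p.1) ^ 2 / 2) / Real.sqrt (2 * π) :=
    (((m1.pow_const 2).neg.div_const 2).exp).div_const _
  have m3 : Measurable fun p : ℝ × ℝ => invExpPdf s p.1 := by
    have : Measurable fun p : ℝ × ℝ => s * Real.exp (-s / p.1) / p.1 ^ 2 :=
      ((((measurable_const.div measurable_fst)).exp.const_mul s)).div
        (measurable_fst.pow_const 2)
    exact this
  exact (m2.mul (Real.continuous_sqrt.measurable.comp measurable_fst)).mul m3

lemma mixF_integrable (s : ℝ) (hs : 0 < s) (x : ℝ) :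
    Integrable (Function.uncurry (mixF s))
      ((volume.restrict (Ioi 0)).prod (volume.restrict (Iic x))) := by
  rw [integrable_prod_iff (mixF_aesm s x)]
  have hsect : ∀ y ∈ Ioi (0:ℝ),
      ∫ t in Iic x, mixF s y t = stdNormalCDF (x * Real.sqrt y) * invExpPdf s y := by
    intro y hy
    simp only [Set.mem_Ioi] at hy
    rw [cdf_scale s x y hy, ← integral_mul_const]
    rfl
  constructor
  · filter_upwards [ae_restrict_mem measurableSet_Ioi] with y hy
    exact mixF_integrable_t s y hy x
  · apply Integrable.mono' (invExpPdf_integrableOn s hs)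
      ((mixF_aesm s x).norm.integral_prod_right')
    filter_upwards [ae_restrict_mem measurableSet_Ioi] with y hy
    simp only [Set.mem_Ioi] at hy
    simp only [Function.uncurry_apply_pair]
    rw [Real.norm_eq_abs, abs_of_nonneg (integral_nonneg fun t => norm_nonneg _)]
    have hnorm : ∫ t in Iic x, ‖mixF s y t‖ = ∫ t in Iic x, mixF s y t := by
      congr 1
      funext t
      rw [Real.norm_eq_abs, abs_of_nonneg (mixF_nonneg s y t hs)]
    rw [hnorm, hsect y hy]
    calc stdNormalCDF (x * Real.sqrt y) * invExpPdf s y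
        ≤ 1 * invExpPdf s y :=
          mul_le_mul_of_nonneg_right (stdNormalCDF_le_one _) (invExpPdf_nonneg s y hs)
      _ = invExpPdf s y := one_mul _

/-- The scale mixture of normals by the inverse exponential law `H_s` is the
symmetric Laplace distribution with parameter `1/√s`. -/
theorem invexp_mixture_of_normals_eq_laplace (s : ℝ) (hs : 0 < s) (x : ℝ) :
    ∫ y in Set.Ioi (0 : ℝ), stdNormalCDF (x * Real.sqrt y) * invExpPdf s y
      = laplaceCDFInvSqrt s x := by
  have h1 : ∀ y ∈ Ioi (0:ℝ),
      stdNormalCDF (x * Real.sqrt y) * invExpPdf s y = ∫ t in Iic x, mixF s y t := by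
    intro y hy
    simp only [Set.mem_Ioi] at hy
    rw [cdf_scale s x y hy, ← integral_mul_const]
    rfl
  rw [setIntegral_congr_fun measurableSet_Ioi h1,
    integral_integral_swap (mixF_integrable s hs x), laplaceCDFInvSqrt]
  apply setIntegral_congr_fun measurableSet_Iic
  intro t _
  exact mixture_density s hs t
end

section
/- Let N_n(s) have distribution function P(N_n(s) ≤ k) = (k/(s+k))^n on the positive integers, with s ≥ 1 integer. Then sup_{x>0} |P(N_n(s)/n ≤ x) - e^{-s/x}| ≤ C_s/n, where C_s = 8e^{-2}/3 for s=1 and n ≥ 2, and C_s = 2e^{-2} for s ≥ 2 and n ≥ 1. -/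
open MeasureTheory

section helpers
open Real

lemma aux_y {y : ℝ} (hy : 2 ≤ y) : y * Real.exp (-y) ≤ 2 * Real.exp (-2) := by
  have h2 : y - 1 ≤ Real.exp (y - 2) := by
    have := Real.add_one_le_exp (y - 2); linarith
  have key : Real.exp (-y) * Real.exp (y - 2) = Real.exp (-2) := by
    rw [← Real.exp_add]; ring_nf
  nlinarith [Real.exp_pos (-y), mul_le_mul_of_nonneg_left h2 (Real.exp_pos (-y)).le, key]

lemma log_le_bound {u : ℝ} (hu : 0 ≤ u) : Real.log (1 + u) ≤ u * (2 + u) / (2 * (1 + u)) := by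
  set y := u * (2 + u) / (2 * (1 + u)) with hy
  have h1u : (0:ℝ) < 1 + u := by linarith
  have hy0 : 0 ≤ y := by positivity
  have hq : 1 + y + y ^ 2 / 2 ≤ Real.exp y := Real.quadratic_le_exp_of_nonneg hy0
  have hdiff : y + y ^ 2 / 2 - u = u ^ 4 / (8 * (1 + u) ^ 2) := by
    rw [hy]; field_simp; ring
  have hx : (1 : ℝ) + u ≤ Real.exp y := by
    have h4 : 0 ≤ u ^ 4 / (8 * (1 + u) ^ 2) := by positivity
    linarith
  calc Real.log (1 + u) ≤ Real.log (Real.exp y) := Real.log_le_log h1u hx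
    _ = y := Real.log_exp y

lemma le_log_bound {u : ℝ} (hu : 0 ≤ u) : 2 * u / (2 + u) ≤ Real.log (1 + u) := by
  set g : ℝ → ℝ := fun v => Real.log (1 + v) - 2 * v / (2 + v) with hg
  have hmono : MonotoneOn g (Set.Ici (0:ℝ)) := by
    apply monotoneOn_of_deriv_nonneg (convex_Ici 0)
    · apply ContinuousOn.sub
      · apply ContinuousOn.log (by fun_prop)
        intro v hv; simp only [Set.mem_Ici] at hv; positivity
      · apply ContinuousOn.div (by fun_prop) (by fun_prop)
        intro v hv; simp only [Set.mem_Ici] at hv; positivity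
    · intro v hv
      rw [interior_Ici] at hv
      simp only [Set.mem_Ioi] at hv
      apply DifferentiableAt.differentiableWithinAt
      apply DifferentiableAt.sub
      · exact (Real.differentiableAt_log (by positivity)).comp v (by fun_prop)
      · exact DifferentiableAt.div (by fun_prop) (by fun_prop) (by positivity)
    · intro v hv
      rw [interior_Ici] at hv
      simp only [Set.mem_Ioi] at hv
      have h1v : (0:ℝ) < 1 + v := by linarith
      have h2v : (0:ℝ) < 2 + v := by linarith
      have hd1 : HasDerivAt (fun w : ℝ => Real.log (1 + w)) (1 / (1 + v)) v := by
        have := (Real.hasDerivAt_log h1v.ne').comp v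
          ((hasDerivAt_id v).const_add 1)
        simpa [one_div, Function.comp_def] using this
      have hd2 : HasDerivAt (fun w : ℝ => 2 * w / (2 + w))
          ((2 * (2 + v) - 2 * v * 1) / (2 + v) ^ 2) v := by
        have := (((hasDerivAt_id v).const_mul 2).div ((hasDerivAt_id v).const_add 2) h2v.ne')
        simpa [Pi.div_def] using this
      have hd : HasDerivAt g (1 / (1 + v) - (2 * (2 + v) - 2 * v * 1) / (2 + v) ^ 2) v :=
        hd1.sub hd2
      rw [hd.deriv]
      rw [sub_nonneg, div_le_div_iff₀ (by positivity) h1v]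
      nlinarith [sq_nonneg v]
  have := hmono (Set.mem_Ici.2 (le_refl 0)) (Set.mem_Ici.2 hu) hu
  simp only [hg] at this
  simp only [add_zero, mul_zero, zero_div, Real.log_one, sub_zero] at this
  linarith

lemma key_exp_diff {a b : ℝ} (ha : 0 < a) (hab : a ≤ b) :
    Real.exp (-a) - Real.exp (-b) ≤ 4 * Real.exp (-2) * (1 / a - 1 / b) := by
  set f : ℝ → ℝ := fun c => Real.exp (-c) - 4 * Real.exp (-2) * c⁻¹ with hf
  have hmono : MonotoneOn f (Set.Ici a) := by
    apply monotoneOn_of_deriv_nonneg (convex_Ici a)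
    · apply ContinuousOn.sub (by fun_prop)
      apply ContinuousOn.mul continuousOn_const
      apply ContinuousOn.inv₀ (by fun_prop)
      intro c hc; simp only [Set.mem_Ici] at hc; exact (lt_of_lt_of_le ha hc).ne'
    · intro c hc
      rw [interior_Ici] at hc
      simp only [Set.mem_Ioi] at hc
      have hc0 : (0:ℝ) < c := lt_trans ha hc
      apply DifferentiableAt.differentiableWithinAt
      apply DifferentiableAt.sub (by fun_prop)
      exact (differentiableAt_inv hc0.ne').const_mul _
    · intro c hc
      rw [interior_Ici] at hc
      simp only [Set.mem_Ioi] at hc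
      have hc0 : (0:ℝ) < c := lt_trans ha hc
      have hd1 : HasDerivAt (fun w : ℝ => Real.exp (-w)) (-Real.exp (-c)) c := by
        simpa [Function.comp_def] using (Real.hasDerivAt_exp (-c)).comp c (hasDerivAt_neg c)
      have hd2 : HasDerivAt (fun w : ℝ => 4 * Real.exp (-2) * w⁻¹)
          (4 * Real.exp (-2) * (-(c ^ 2)⁻¹)) c :=
        (hasDerivAt_inv hc0.ne').const_mul _
      have hd : HasDerivAt f (-Real.exp (-c) - 4 * Real.exp (-2) * (-(c ^ 2)⁻¹)) c :=
        hd1.sub hd2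
      rw [hd.deriv]
      have h1 : c ^ 2 * Real.exp (-c) ≤ 4 * Real.exp (-2) := by
        have h2 : c / 2 ≤ Real.exp ((c - 2) / 2) := by
          have := Real.add_one_le_exp ((c - 2) / 2); linarith
        have h3 : (c / 2) ^ 2 ≤ Real.exp (c - 2) := by
          have hsq : Real.exp ((c - 2) / 2) ^ 2 = Real.exp (c - 2) := by
            rw [pow_two, ← Real.exp_add]; ring_nf
          rw [← hsq]
          exact pow_le_pow_left₀ (by positivity) h2 2
        have h4 : Real.exp (-c) * Real.exp (c - 2) = Real.exp (-2) := by
          rw [← Real.exp_add]; congr 1; ring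
        nlinarith [Real.exp_pos (-c), Real.exp_pos (c - 2),
          mul_le_mul_of_nonneg_left h3 (Real.exp_pos (-c)).le]
      have h5 : Real.exp (-c) ≤ 4 * Real.exp (-2) * (c ^ 2)⁻¹ := by
        rw [← div_eq_mul_inv, le_div_iff₀ (by positivity : (0:ℝ) < c ^ 2)]
        nlinarith [h1]
      linarith
  have := hmono (Set.mem_Ici.2 (le_refl a)) (Set.mem_Ici.2 hab) hab
  simp only [hf] at this
  have ha' : a ≠ 0 := ha.ne'
  have hb' : b ≠ 0 := (lt_of_lt_of_le ha hab).ne'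
  rw [one_div, one_div]
  linarith

end helpers

set_option maxHeartbeats 1000000 in
/-- First-order rate of convergence for the maximum of discrete Pareto variables:
if `P(N ≤ k) = (k/(s+k))^n` with integer `s ≥ 1`, then for every `x > 0`,
`|P(N/n ≤ x) - e^{-s/x}| ≤ C_s/n` with `C_s = 8e^{-2}/3` for `s = 1` (and `n ≥ 2`)
and `C_s = 2e^{-2}` for `s ≥ 2` (and `n ≥ 1`). -/
theorem discrete_pareto_max_rate
    {Ω : Type*} [MeasurableSpace Ω] (μ : Measure Ω) [IsProbabilityMeasure μ]
    (s : ℕ) (hs : 1 ≤ s) (n : ℕ)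
    (N : Ω → ℕ) (hNmeas : Measurable N)
    (hlaw : ∀ k : ℕ, (μ {ω | N ω ≤ k}).toReal = ((k : ℝ) / (s + k)) ^ n)
    (hn : if s = 1 then 2 ≤ n else 1 ≤ n) :
    ∀ x : ℝ, 0 < x →
      |(μ {ω | (N ω : ℝ) / n ≤ x}).toReal - Real.exp (-(s : ℝ) / x)|
        ≤ (if s = 1 then 8 * Real.exp (-2) / 3 else 2 * Real.exp (-2)) / n := by
  intro x hx
  have hn1 : 1 ≤ n := by split_ifs at hn <;> omega
  have hnR : (0:ℝ) < n := by exact_mod_cast hn1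
  have hsR : (1:ℝ) ≤ s := by exact_mod_cast hs
  have hsR0 : (0:ℝ) < s := by linarith
  have hE : (0:ℝ) < Real.exp (-2) := Real.exp_pos _
  set T : ℝ := (if s = 1 then 8 * Real.exp (-2) / 3 else 2 * Real.exp (-2)) with hT
  clear_value T
  have hTge : 2 * Real.exp (-2) ≤ T := by
    rw [hT]; split_ifs
    · nlinarith
    · exact le_refl _
  have hT0 : 0 < T := lt_of_lt_of_le (by positivity) hTge
  set k := ⌊x * (n:ℝ)⌋₊ with hk
  have hxn0 : 0 ≤ x * (n:ℝ) := by positivity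
  have hset : {ω | (N ω : ℝ) / n ≤ x} = {ω | N ω ≤ k} := by
    ext ω
    simp only [Set.mem_setOf_eq]
    rw [div_le_iff₀ hnR]
    exact (Nat.le_floor_iff hxn0).symm
  rw [hset, hlaw k, neg_div]
  have hkle : (k:ℝ) ≤ x * n := Nat.floor_le hxn0
  have hklt : x * n < (k:ℝ) + 1 := Nat.lt_floor_add_one _
  clear_value k
  set β := (s:ℝ)/x with hβ
  clear_value β
  have hβ0 : 0 < β := by rw [hβ]; positivity
  have hsn2 : (2:ℝ) ≤ (s:ℝ) * n := by
    by_cases h1 : s = 1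
    · rw [if_pos h1] at hn
      have h2 : (2:ℝ) ≤ (n:ℝ) := by exact_mod_cast hn
      rw [h1]; push_cast; linarith
    · rw [if_neg h1] at hn
      have h2 : (2:ℝ) ≤ (s:ℝ) := by exact_mod_cast (by omega : 2 ≤ s)
      have h3 : (1:ℝ) ≤ (n:ℝ) := by exact_mod_cast hn
      nlinarith
  clear hlaw hset hNmeas hn hk
  rcases Nat.eq_zero_or_pos k with hk0 | hkpos
  · -- k = 0 case
    rw [hk0]
    have hA0 : ((0:ℕ):ℝ) / ((s:ℝ) + (0:ℕ)) ^ 1 = 0 := by simp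
    have : (((0:ℕ):ℝ) / ((s:ℝ) + ((0:ℕ):ℝ))) ^ n = 0 := by
      rw [Nat.cast_zero, zero_div, zero_pow (by omega : n ≠ 0)]
    rw [this, zero_sub, abs_neg, abs_of_pos (Real.exp_pos _)]
    -- β > s*n
    have hx1 : x * n < 1 := by
      have := hklt; rw [hk0] at this; push_cast at this; linarith
    have hβgt : (s:ℝ) * n ≤ β := by
      rw [hβ, le_div_iff₀ hx]
      nlinarith
    have h1 : Real.exp (-β) ≤ Real.exp (-((s:ℝ)*n)) := by
      apply Real.exp_le_exp.2; linarith
    have h2 := aux_y hsn2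
    have hsn0 : (0:ℝ) < (s:ℝ)*n := by positivity
    have h3 : Real.exp (-((s:ℝ)*n)) ≤ 2 * Real.exp (-2) / ((s:ℝ)*n) := by
      rw [le_div_iff₀ hsn0]; nlinarith
    have h4 : 2 * Real.exp (-2) / ((s:ℝ)*n) ≤ 2 * Real.exp (-2) / n := by
      gcongr; nlinarith
    have h5 : 2 * Real.exp (-2) / (n:ℝ) ≤ T / n := by gcongr
    linarith
  · -- k ≥ 1 case
    have hkR : (1:ℝ) ≤ (k:ℝ) := by exact_mod_cast hkpos
    have hkR0 : (0:ℝ) < (k:ℝ) := by linarith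
    set u := (s:ℝ)/(k:ℝ) with hu
    clear_value u
    have hu0 : 0 < u := by rw [hu]; positivity
    have h1u : (0:ℝ) < 1 + u := by linarith
    set L := Real.log (1 + u) with hL
    clear_value L
    have hL0 : 0 < L := by rw [hL]; exact Real.log_pos (by linarith)
    have hA : (((k:ℕ):ℝ) / ((s:ℝ) + (k:ℝ))) ^ n = Real.exp (-((n:ℝ) * L)) := by
      have h1 : (k:ℝ)/((s:ℝ)+(k:ℝ)) = Real.exp (-L) := by
        rw [Real.exp_neg, hL, Real.exp_log h1u, hu]
        rw [show (1:ℝ) + (s:ℝ)/(k:ℝ) = ((s:ℝ)+(k:ℝ))/(k:ℝ) by field_simp; ring]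
        rw [inv_div]
      rw [h1, ← Real.exp_nat_mul]
      congr 1; ring
    rw [hA]
    have hub : L ≤ u * (2 + u) / (2 * (1 + u)) := by
      rw [hL]; exact log_le_bound hu0.le
    have hlb : 2 * u / (2 + u) ≤ L := by
      rw [hL]; exact le_log_bound hu0.le
    have hLu : L ≤ u := by
      refine le_trans hub ?_
      rw [div_le_iff₀ (by positivity)]
      nlinarith
    have hnL0 : (0:ℝ) < (n:ℝ) * L := by positivity
    have hnu0 : (0:ℝ) < (n:ℝ) * u := by positivity
    rw [abs_sub_le_iff]
    constructor
    · -- Side 1 : exp(-(n*L)) - exp(-β) ≤ T/n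
      have hβle : β ≤ (n:ℝ) * u := by
        rw [hβ, div_le_iff₀ hx, hu]
        rw [show (n:ℝ) * ((s:ℝ)/(k:ℝ)) * x = (s:ℝ) * (x * n) / (k:ℝ) by field_simp]
        rw [le_div_iff₀ hkR0]
        nlinarith
      have h1 : Real.exp (-((n:ℝ)*u)) ≤ Real.exp (-β) := by
        apply Real.exp_le_exp.2; linarith
      have h2 := key_exp_diff hnL0 (by nlinarith : (n:ℝ)*L ≤ (n:ℝ)*u)
      have hwork : 2*(u - L) ≤ L*u := by
        have h2u : (0:ℝ) < 2+u := by linarith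
        rw [div_le_iff₀ h2u] at hlb
        nlinarith
      have h3 : 1/((n:ℝ)*L) - 1/((n:ℝ)*u) ≤ 1/(2*(n:ℝ)) := by
        rw [show 1/((n:ℝ)*L) - 1/((n:ℝ)*u) = (u - L)/((n:ℝ)*L*u) by field_simp]
        rw [div_le_div_iff₀ (by positivity) (by positivity)]
        nlinarith [mul_le_mul_of_nonneg_left hwork hnR.le]
      have h4 : 4 * Real.exp (-2) * (1/((n:ℝ)*L) - 1/((n:ℝ)*u))
          ≤ 4 * Real.exp (-2) * (1/(2*(n:ℝ))) :=
        mul_le_mul_of_nonneg_left h3 (by positivity)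
      have h5 : 4 * Real.exp (-2) * (1/(2*(n:ℝ))) = 2 * Real.exp (-2) / n := by
        field_simp; ring
      have h6 : 2 * Real.exp (-2) / (n:ℝ) ≤ T / n := by gcongr
      linarith
    · -- Side 2 : exp(-β) - exp(-(n*L)) ≤ T/n
      by_cases hc : β < (n:ℝ)*L
      · have h2 := key_exp_diff hβ0 hc.le
        have hβinv : 1/β ≤ ((k:ℝ)+1)/((n:ℝ)*(s:ℝ)) := by
          rw [hβ, one_div_div, div_le_div_iff₀ hsR0 (by positivity)]
          nlinarith
        by_cases hs1 : s = 1
        · -- s = 1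
          have hsR1 : (s:ℝ) = 1 := by rw [hs1]; norm_num
          have hTval : T = 8 * Real.exp (-2) / 3 := by rw [hT, if_pos hs1]
          have hueq : u = 1/(k:ℝ) := by rw [hu, hsR1]
          have hM : L ≤ (2*(k:ℝ)+1)/(2*(k:ℝ)*((k:ℝ)+1)) := by
            refine le_trans hub (le_of_eq ?_)
            rw [hueq]; field_simp
          have hM0 : (0:ℝ) < (2*(k:ℝ)+1)/(2*(k:ℝ)*((k:ℝ)+1)) := by positivity
          have hM' : L * (2*(k:ℝ)*((k:ℝ)+1)) ≤ 2*(k:ℝ)+1 := by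
            rw [← le_div_iff₀ (by positivity : (0:ℝ) < 2*(k:ℝ)*((k:ℝ)+1))]
            exact hM
          have hinvL : 2*(k:ℝ)*((k:ℝ)+1)/((2*(k:ℝ)+1)*(n:ℝ)) ≤ 1/((n:ℝ)*L) := by
            rw [div_le_div_iff₀ (by positivity) (by positivity)]
            nlinarith [mul_le_mul_of_nonneg_left hM' hnR.le]
          have hfrac : 1/β - 1/((n:ℝ)*L) ≤ (2/3)/(n:ℝ) := by
            have hβinv' : 1/β ≤ ((k:ℝ)+1)/(n:ℝ) := by
              rw [hsR1, mul_one] at hβinv; exact hβinv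
            have hkey : ((k:ℝ)+1)/(n:ℝ) - 2*(k:ℝ)*((k:ℝ)+1)/((2*(k:ℝ)+1)*(n:ℝ)) ≤ (2/3)/(n:ℝ) := by
              rw [show ((k:ℝ)+1)/(n:ℝ) - 2*(k:ℝ)*((k:ℝ)+1)/((2*(k:ℝ)+1)*(n:ℝ))
                  = ((k:ℝ)+1)/((2*(k:ℝ)+1)*(n:ℝ)) by field_simp; ring]
              rw [div_le_div_iff₀ (by positivity) (by positivity)]
              nlinarith
            linarith
          have h4 : 4 * Real.exp (-2) * (1/β - 1/((n:ℝ)*L))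
              ≤ 4 * Real.exp (-2) * ((2/3)/(n:ℝ)) :=
            mul_le_mul_of_nonneg_left hfrac (by positivity)
          have h5 : 4 * Real.exp (-2) * ((2/3)/(n:ℝ)) = T/n := by
            rw [hTval]; field_simp; ring
          linarith
        · -- s ≥ 2
          have hs2 : (2:ℝ) ≤ (s:ℝ) := by
            have : 2 ≤ s := by omega
            exact_mod_cast this
          have hTval : T = 2 * Real.exp (-2) := by rw [hT, if_neg hs1]
          have hLk : L * (k:ℝ) ≤ (s:ℝ) := by
            have := hLu
            rw [hu, le_div_iff₀ hkR0] at this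
            linarith
          have hinvL : (k:ℝ)/((n:ℝ)*(s:ℝ)) ≤ 1/((n:ℝ)*L) := by
            rw [div_le_div_iff₀ (by positivity) (by positivity)]
            nlinarith [mul_le_mul_of_nonneg_left hLk hnR.le]
          have hfrac : 1/β - 1/((n:ℝ)*L) ≤ 1/(2*(n:ℝ)) := by
            have hkey : ((k:ℝ)+1)/((n:ℝ)*(s:ℝ)) - (k:ℝ)/((n:ℝ)*(s:ℝ)) = 1/((n:ℝ)*(s:ℝ)) := by
              field_simp; ring
            have h6 : 1/((n:ℝ)*(s:ℝ)) ≤ 1/(2*(n:ℝ)) := by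
              rw [div_le_div_iff₀ (by positivity) (by positivity)]
              nlinarith
            linarith
          have h4 : 4 * Real.exp (-2) * (1/β - 1/((n:ℝ)*L))
              ≤ 4 * Real.exp (-2) * (1/(2*(n:ℝ))) :=
            mul_le_mul_of_nonneg_left hfrac (by positivity)
          have h5 : 4 * Real.exp (-2) * (1/(2*(n:ℝ))) = T/n := by
            rw [hTval]; field_simp; ring
          linarith
      · push_neg at hc
        have hee : Real.exp (-β) ≤ Real.exp (-((n:ℝ)*L)) :=
          Real.exp_le_exp.mpr (by linarith)
        have hTn : (0:ℝ) ≤ T/n := by positivity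
        linarith
end
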